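/- arXiv:2212.05790 — 5 statements merged into one kernel-verified Lean document; each statement's English description precedes it below -/
import Mathlib

section
/- Let n ∈ ℕ and let Z ⊆ (Fin n → k) be a Zariski-closed subset (a finite-dimensional affine variety). On Z^ℕ := {x : ℕ → (Fin n → k) | ∀ s, x s ∈ Z}, let Sym act by permuting the ℕ-indexed copies, (σ • x) s = x (σ⁻¹ s). Then Z^ℕ is topologically Sym-Noetherian: for every descending chain X₁ ⊇ X₂ ⊇ X₃ ⊇ ⋯ of Zariski-closed Sym-stable subsets of Z^ℕ, there exists N such that X_n = X_{n+1} for all n ≥ N. -/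
noncomputable section

/-- A permutation of `ℕ` with finite support. -/
def IsFinPerm (σ : Equiv.Perm ℕ) : Prop := ∃ N : ℕ, ∀ i : ℕ, N ≤ i → σ i = i

/-- A subset of `I → k` is Zariski closed if it is the common zero locus of a
set of polynomials. -/
def IsZClosed {k : Type*} [Field k] {I : Type*} (X : Set (I → k)) : Prop :=
  ∃ S : Set (MvPolynomial I k), X = {x | ∀ f ∈ S, MvPolynomial.eval x f = 0}

/-!
Cohen's argument. A closed set is the zero locus of its vanishing ideal in `k[x_{s,i}]`, and
invariance under finitary permutations makes that ideal stable under the monoid of strictly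
increasing maps `ℕ → ℕ` acting on the block index `s`. An ascending chain of such ideals
stabilises: otherwise pick, at every strict step, a new polynomial of least leading monomial in a
lex order compatible with these maps. Higman's lemma, over Dickson's lemma for a single block,
gives `i < j` and a shift `g` with `g • lm (F i) ∣ lm (F j)`, and reducing `F j` by `g • F i`
yields a new polynomial at step `j` with a smaller leading monomial.
-/

open MvPolynomial MonomialOrder

namespace IsFinPerm

lemma one : IsFinPerm 1 := ⟨0, fun _ _ => rfl⟩

lemma mul {σ τ : Equiv.Perm ℕ} (hσ : IsFinPerm σ) (hτ : IsFinPerm τ) : IsFinPerm (σ * τ) := by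
  obtain ⟨N, hN⟩ := hσ
  obtain ⟨M, hM⟩ := hτ
  refine ⟨max N M, fun i hi => ?_⟩
  rw [Equiv.Perm.mul_apply, hM i (le_of_max_le_right hi), hN i (le_of_max_le_left hi)]

lemma inv {σ : Equiv.Perm ℕ} (hσ : IsFinPerm σ) : IsFinPerm σ⁻¹ := by
  obtain ⟨N, hN⟩ := hσ
  exact ⟨N, fun i hi => by rw [Equiv.Perm.inv_eq_iff_eq, hN i hi]⟩

lemma swap (a b : ℕ) : IsFinPerm (Equiv.swap a b) :=
  ⟨max a b + 1, fun _ hi => Equiv.swap_apply_of_ne_of_ne (by omega) (by omega)⟩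

end IsFinPerm

lemma exists_isFinPerm_eqOn_lt {g : ℕ → ℕ} (hg : g.Injective) (B : ℕ) :
    ∃ σ : Equiv.Perm ℕ, IsFinPerm σ ∧ ∀ j < B, σ j = g j := by
  induction B with
  | zero => exact ⟨1, .one, fun j hj => (Nat.not_lt_zero j hj).elim⟩
  | succ B ih =>
    obtain ⟨σ, hσ, hσg⟩ := ih
    -- the swap fixes every `j < B`, since `σ j = g j ≠ g B` for those
    refine ⟨σ * Equiv.swap B (σ⁻¹ (g B)), hσ.mul (.swap _ _), fun j hj => ?_⟩
    rcases Nat.lt_succ_iff_lt_or_eq.mp hj with hj | rfl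
    · have hjg : j ≠ σ⁻¹ (g B) := by
        rw [Ne, Equiv.Perm.eq_inv_iff_eq, hσg j hj]
        exact fun h => hj.ne (hg h)
      rw [Equiv.Perm.mul_apply, Equiv.swap_apply_of_ne_of_ne hj.ne hjg, hσg j hj]
    · simp

namespace IsZClosed

variable {k : Type*} [Field k] {I J : Type*}

lemma iInter {ι : Type*} {Z : ι → Set (I → k)} (hZ : ∀ i, IsZClosed (Z i)) :
    IsZClosed (⋂ i, Z i) := by
  choose S hS using hZ
  refine ⟨⋃ i, S i, ?_⟩
  ext x
  simp only [hS, Set.mem_iInter, Set.mem_ofPred_eq, Set.mem_iUnion]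
  grind

lemma inter {Z W : Set (I → k)} (hZ : IsZClosed Z) (hW : IsZClosed W) : IsZClosed (Z ∩ W) := by
  rw [Set.inter_eq_iInter]
  exact iInter (fun b => by cases b <;> assumption)

lemma preimage_comp {Z : Set (I → k)} (hZ : IsZClosed Z) (φ : I → J) :
    IsZClosed {x : J → k | x ∘ φ ∈ Z} := by
  obtain ⟨S, rfl⟩ := hZ
  refine ⟨rename φ '' S, ?_⟩
  ext x
  simp [eval_rename]

lemma zeroLocus_vanishingIdeal {Z : Set (I → k)} (hZ : IsZClosed Z) :
    zeroLocus k (vanishingIdeal k Z) = Z := by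
  obtain ⟨S, rfl⟩ := hZ
  have hspan : zeroLocus k (Ideal.span S) = {x | ∀ f ∈ S, eval x f = 0} := by
    simp [zeroLocus_span]
  rw [← hspan]
  exact zeroLocus_vanishingIdeal_galoisConnection.l_u_l_eq_l _

end IsZClosed

section IncStable

variable {ι : Type*}

def IsIncStable {R : Type*} [CommSemiring R] (I : Ideal (MvPolynomial (ℕ × ι) R)) : Prop :=
  ∀ g : ℕ → ℕ, StrictMono g → ∀ f ∈ I, rename (Prod.map g id) f ∈ I

lemma isIncStable_vanishingIdeal {k : Type*} [Field k] {Y : Set (ℕ × ι → k)}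
    (hY : ∀ σ, IsFinPerm σ → ∀ y ∈ Y, y ∘ Prod.map σ id ∈ Y) :
    IsIncStable (vanishingIdeal k Y) := by
  intro g hg f hf y hy
  obtain ⟨σ, hσ, hσg⟩ := exists_isFinPerm_eqOn_lt hg.injective (f.vars.sup Prod.fst + 1)
  -- `f` only sees the blocks below its largest variable index, where `σ` and `g` agree
  have hagree : eval (y ∘ Prod.map g id) f = eval (y ∘ Prod.map σ id) f :=
    eval₂Hom_congr' rfl (fun v hv _ => by
      simp [Prod.map, hσg v.1 (Nat.lt_succ_of_le (Finset.le_sup (f := Prod.fst) hv))]) rfl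
  rw [mem_vanishingIdeal_iff] at hf
  simpa [eval_rename, hagree] using hf _ (hY σ hσ y hy)

end IncStable

lemma List.Forall₂.getD_le {α : Type*} [Preorder α] {l₁ l₂ : List α}
    (h : List.Forall₂ (· ≤ ·) l₁ l₂) (d : α) (i : ℕ) : l₁.getD i d ≤ l₂.getD i d := by
  induction h generalizing i with
  | nil => simp
  | cons hab _ ih =>
    cases i
    · exact hab
    · exact ih _

lemma List.SublistForall₂.exists_getD_le {α : Type*} [Preorder α] {l₁ l₂ : List α}
    (h : List.SublistForall₂ (· ≤ ·) l₁ l₂) (d : α) :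
    ∃ f : ℕ ↪o ℕ, ∀ i, l₁.getD i d ≤ l₂.getD (f i) d := by
  obtain ⟨l, hl, hsub⟩ := List.sublistForall₂_iff.mp h
  obtain ⟨f, hf⟩ := List.sublist_iff_exists_orderEmbedding_getElem?_eq.mp hsub
  refine ⟨f, fun i => ?_⟩
  rw [List.getD_eq_getElem?_getD (l := l₂), ← hf, ← List.getD_eq_getElem?_getD]
  exact hl.getD_le d i

lemma Finsupp.mapDomain_le_of_forall_le {α β M : Type*} [AddCommMonoid M] [PartialOrder M]
    [CanonicallyOrderedAdd M] {φ : α → β} (hφ : φ.Injective) {a : α →₀ M} {b : β →₀ M}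
    (h : ∀ x, a x ≤ b (φ x)) : a.mapDomain φ ≤ b := by
  intro y
  by_cases hy : y ∈ Set.range φ
  · obtain ⟨x, rfl⟩ := hy
    simpa [Finsupp.mapDomain_apply hφ] using h x
  · simp [Finsupp.mapDomain_of_notMem_range _ _ hy]

section Blocks

variable {ι : Type*}

def blocks (a : ℕ × ι →₀ ℕ) : List (ι → ℕ) :=
  (List.range (a.support.sup Prod.fst + 1)).map fun s i => a (s, i)

lemma getD_blocks (a : ℕ × ι →₀ ℕ) (s : ℕ) : (blocks a).getD s 0 = fun i => a (s, i) := by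
  rw [blocks, List.getD_eq_getElem?_getD, List.getElem?_map]
  by_cases hs : s < a.support.sup Prod.fst + 1
  · simp [List.getElem?_range hs]
  · rw [List.getElem?_eq_none (by simpa using hs)]
    funext i
    refine (Finsupp.notMem_support_iff.mp fun hmem => hs ?_).symm
    exact Nat.lt_succ_of_le (Finset.le_sup (f := Prod.fst) hmem)

lemma exists_lt_mapDomain_le [Finite ι] (a : ℕ → (ℕ × ι →₀ ℕ)) :
    ∃ i j, i < j ∧ ∃ g : ℕ → ℕ, StrictMono g ∧ (a i).mapDomain (Prod.map g id) ≤ a j := by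
  -- Higman's lemma on the block decompositions, over Dickson's lemma for each block
  have hpwo :=
    (Set.isPWO_of_wellQuasiOrderedLE (Set.univ : Set (ι → ℕ))).partiallyWellOrderedOn_sublistForall₂
  obtain ⟨i, j, hij, hsub⟩ := hpwo.exists_lt (f := fun t => blocks (a t)) fun _ _ _ => trivial
  obtain ⟨f, hf⟩ := hsub.exists_getD_le 0
  refine ⟨i, j, hij, f, f.strictMono, Finsupp.mapDomain_le_of_forall_le ?_ fun ⟨s, l⟩ => ?_⟩
  · exact f.injective.prodMap Function.injective_id
  · have := hf s
    rw [getD_blocks, getD_blocks] at this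
    exact this l

end Blocks

lemma Finsupp.toLex_mapDomain_lt_toLex_mapDomain {α N : Type*} [LinearOrder α] [AddCommMonoid N]
    [LT N] {G : α → α} (hG : StrictMono G) {a b : α →₀ N} (h : toLex a < toLex b) :
    toLex (a.mapDomain G) < toLex (b.mapDomain G) := by
  rw [Finsupp.Lex.lt_iff] at h ⊢
  obtain ⟨i, hlt, hi⟩ := h
  refine ⟨G i, fun j hj => ?_, ?_⟩
  · by_cases hr : j ∈ Set.range G
    · obtain ⟨s, rfl⟩ := hr
      simpa [Finsupp.mapDomain_apply hG.injective] using hlt s (hG.lt_iff_lt.mp hj)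
    · simp [Finsupp.mapDomain_of_notMem_range _ _ hr]
  · simpa [Finsupp.mapDomain_apply hG.injective] using hi

namespace MonomialOrder

variable {σ τ : Type*}

def comap (m : MonomialOrder τ) (e : σ ≃ τ) : MonomialOrder σ where
  syn := m.syn
  toSyn := (Finsupp.domCongr e).trans m.toSyn
  toSyn_monotone a b h := m.toSyn_monotone
    (show Finsupp.domCongr e a ≤ Finsupp.domCongr e b from fun i => by simpa using h (e.symm i))

end MonomialOrder

section BlockLex

variable (ι : Type*) [LinearOrder ι] [WellFoundedLT ι]

-- The variables are ordered in reverse, since lex on monomials needs a variable order without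
-- infinite ascending chains to be well founded.
def blockLex : MonomialOrder (ℕ × ι) :=
  MonomialOrder.lex.comap (toLex.trans OrderDual.toDual : ℕ × ι ≃ (ℕ ×ₗ ι)ᵒᵈ)

variable {ι}

lemma blockLex_mapDomain_lt {g : ℕ → ℕ} (hg : StrictMono g) {a b : ℕ × ι →₀ ℕ}
    (h : a ≺[blockLex ι] b) :
    Finsupp.mapDomain (Prod.map g id) a ≺[blockLex ι] Finsupp.mapDomain (Prod.map g id) b := by
  set e : ℕ × ι ≃ (ℕ ×ₗ ι)ᵒᵈ := toLex.trans OrderDual.toDual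
  set G : (ℕ ×ₗ ι)ᵒᵈ → (ℕ ×ₗ ι)ᵒᵈ := e ∘ Prod.map g id ∘ e.symm
  have hG : StrictMono G := by
    rintro ⟨x₁, y₁⟩ ⟨x₂, y₂⟩ hlt
    change toLex (x₂, y₂) < toLex (x₁, y₁) at hlt
    change toLex (g x₂, y₂) < toLex (g x₁, y₁)
    simp only [Prod.Lex.toLex_lt_toLex] at hlt ⊢
    rcases hlt with hlt | ⟨rfl, hlt⟩
    · exact Or.inl (hg hlt)
    · exact Or.inr ⟨rfl, hlt⟩
  have hconj (c : ℕ × ι →₀ ℕ) : Finsupp.equivMapDomain e (c.mapDomain (Prod.map g id)) =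
      (Finsupp.equivMapDomain e c).mapDomain G := by
    simp only [Finsupp.equivMapDomain_eq_mapDomain, ← Finsupp.mapDomain_comp]
    rfl
  have hsyn (c d : ℕ × ι →₀ ℕ) :
      c ≺[blockLex ι] d ↔ toLex (Finsupp.equivMapDomain e c) < toLex (Finsupp.equivMapDomain e d) :=
    Iff.rfl
  rw [hsyn] at h ⊢
  rw [hconj, hconj]
  exact Finsupp.toLex_mapDomain_lt_toLex_mapDomain hG h

end BlockLex

namespace MonomialOrder

variable {σ : Type*} {m : MonomialOrder σ}

section Rename

variable {τ R : Type*} [CommSemiring R] {m' : MonomialOrder τ} {φ : σ → τ}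

lemma degree_rename (hφ : φ.Injective)
    (hm : ∀ a b, a ≺[m] b → a.mapDomain φ ≺[m'] b.mapDomain φ) (f : MvPolynomial σ R) :
    m'.degree (rename φ f) = (m.degree f).mapDomain φ := by
  classical
  rcases eq_or_ne f 0 with rfl | hf
  · simp
  have hmem : (m.degree f).mapDomain φ ∈ (rename φ f).support := by
    rw [mem_support_iff, coeff_rename_mapDomain φ hφ]
    exact m.coeff_degree_ne_zero_iff.mpr hf
  refine m'.toSyn.injective (le_antisymm (m'.degree_le_iff.mpr fun c hc => ?_) (m'.le_degree hmem))
  rw [support_rename_of_injective hφ, Finset.mem_image] at hc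
  obtain ⟨a, ha, rfl⟩ := hc
  rcases (m.le_degree ha).lt_or_eq with hlt | heq
  · exact (hm _ _ hlt).le
  · rw [m.toSyn.injective heq]

lemma leadingCoeff_rename (hφ : φ.Injective)
    (hm : ∀ a b, a ≺[m] b → a.mapDomain φ ≺[m'] b.mapDomain φ) (f : MvPolynomial σ R) :
    m'.leadingCoeff (rename φ f) = m.leadingCoeff f := by
  rw [leadingCoeff, degree_rename hφ hm, coeff_rename_mapDomain φ hφ, leadingCoeff]

end Rename

section Field

variable {k : Type*} [Field k]

lemma degree_reduce_lt_of_ne_zero {f b : MvPolynomial σ k} (hb : IsUnit (m.leadingCoeff b))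
    (hbf : m.degree b ≤ m.degree f) (hr : m.reduce hb f ≠ 0) :
    m.degree (m.reduce hb f) ≺[m] m.degree f := by
  refine m.degree_reduce_lt hb hbf fun hf => hr ?_
  have hb0 : m.degree b = 0 := le_antisymm (hf ▸ hbf) bot_le
  have hu : (↑hb.unit⁻¹ : k) * m.leadingCoeff b = 1 := hb.val_inv_mul
  rw [reduce, hf, hb0, tsub_zero]
  generalize (↑hb.unit⁻¹ : k) = u at hu ⊢
  rw [m.eq_C_of_degree_eq_zero hb0]
  nth_rw 1 [m.eq_C_of_degree_eq_zero hf]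
  rw [monomial_zero', ← C_mul, mul_right_comm, hu, one_mul, sub_self]

lemma exists_degree_lt_of_degree_le {J J' : Ideal (MvPolynomial σ k)} (hJ : J ≤ J')
    {f b : MvPolynomial σ k} (hfJ' : f ∈ J') (hfJ : f ∉ J) (hbJ : b ∈ J) (hb : b ≠ 0)
    (hbf : m.degree b ≤ m.degree f) :
    ∃ r ∈ J', r ∉ J ∧ m.degree r ≺[m] m.degree f := by
  have hunit : IsUnit (m.leadingCoeff b) := (m.leadingCoeff_ne_zero_iff.mpr hb).isUnit
  have hmul := J.mul_mem_left (monomial (m.degree f - m.degree b)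
    (hunit.unit⁻¹ * m.leadingCoeff f)) hbJ
  have hrJ : m.reduce hunit f ∉ J := fun hr => hfJ (by simpa [reduce] using add_mem hr hmul)
  exact ⟨_, sub_mem hfJ' (hJ hmul), hrJ,
    m.degree_reduce_lt_of_ne_zero hunit hbf fun h0 => hrJ (h0 ▸ zero_mem _)⟩

end Field

end MonomialOrder

theorem wellFoundedGT_isIncStable {k ι : Type*} [Field k] [Finite ι] :
    WellFoundedGT {I : Ideal (MvPolynomial (ℕ × ι) k) // IsIncStable I} := by
  classical
  obtain ⟨_, ⟨e⟩⟩ := Finite.exists_equiv_fin ι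
  let _ : LinearOrder ι := LinearOrder.lift' e e.injective
  set m := blockLex ι
  refine ⟨RelEmbedding.wellFounded_iff_isEmpty.mpr ⟨fun J => ?_⟩⟩
  have hJ {p q : ℕ} (h : p ≤ q) : (J p).1 ≤ (J q).1 := by
    rcases h.lt_or_eq with h | rfl
    exacts [(J.map_rel_iff.mpr h).le, le_rfl]
  have hnonempty (q : ℕ) : {f | f ∈ (J (q + 1)).1 ∧ f ∉ (J q).1}.Nonempty :=
    SetLike.exists_of_lt (J.map_rel_iff.mpr q.lt_succ_self)
  -- `F q` is a polynomial of least degree entering the chain at step `q + 1`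
  choose F hF hFmin using fun q =>
    (InvImage.wf (m.toSyn ∘ m.degree) wellFounded_lt).has_min _ (hnonempty q)
  obtain ⟨i, j, hij, g, hg, hle⟩ := exists_lt_mapDomain_le fun q => m.degree (F q)
  have hφ : (Prod.map g id : ℕ × ι → ℕ × ι).Injective := hg.injective.prodMap Function.injective_id
  have hm (a b) : a ≺[m] b → a.mapDomain (Prod.map g id) ≺[m] b.mapDomain (Prod.map g id) :=
    blockLex_mapDomain_lt hg
  have hFi : F i ≠ 0 := fun h0 => (hF i).2 (h0 ▸ zero_mem _)
  -- the shift of `F i` already lies in `J j` and its leading monomial divides that of `F j`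
  obtain ⟨r, hrJ', hrJ, hr⟩ := m.exists_degree_lt_of_degree_le (hJ j.le_succ) (hF j).1 (hF j).2
    (hJ hij ((J (i + 1)).2 g hg _ (hF i).1))
    (by rwa [Ne, ← m.leadingCoeff_eq_zero_iff, leadingCoeff_rename hφ hm, leadingCoeff_eq_zero_iff])
    (by rwa [degree_rename hφ hm])
  exact hFmin j r ⟨hrJ', hrJ⟩ hr

theorem symNoetherianity_of_powers_of_affine_varieties_general
    {k : Type*} [Field k]
    (n : ℕ) (Z : Set (Fin n → k)) (hZcl : IsZClosed Z)
    (X : ℕ → Set (ℕ → Fin n → k))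
    (hchain : ∀ q : ℕ, X (q + 1) ⊆ X q)
    (hclosed : ∀ q : ℕ, ∃ S : Set (MvPolynomial (ℕ × Fin n) k),
      X q = {x | (∀ s : ℕ, x s ∈ Z) ∧
        ∀ f ∈ S, MvPolynomial.eval (fun p : ℕ × Fin n => x p.1 p.2) f = 0})
    (hSym : ∀ (q : ℕ) (σ : Equiv.Perm ℕ), IsFinPerm σ →
      ∀ x ∈ X q, (fun s => x (σ⁻¹ s)) ∈ X q) :
    ∃ N : ℕ, ∀ q : ℕ, N ≤ q → X q = X (q + 1) := by
  set Y : ℕ → Set (ℕ × Fin n → k) := fun q => Equiv.curry _ _ _ ⁻¹' X q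
  have hYcl (q : ℕ) : IsZClosed (Y q) := by
    obtain ⟨S, hS⟩ := hclosed q
    have hYS : Y q = (⋂ s, {y | y ∘ Prod.mk s ∈ Z}) ∩ {y | ∀ f ∈ S, eval y f = 0} := by
      ext y
      simp only [Y, hS, Set.mem_preimage, Set.mem_inter_iff, Set.mem_iInter]
      rfl
    rw [hYS]
    exact (IsZClosed.iInter fun s => hZcl.preimage_comp _).inter ⟨S, rfl⟩
  have hYsym (q : ℕ) (σ : Equiv.Perm ℕ) (hσ : IsFinPerm σ) (y : ℕ × Fin n → k) (hy : y ∈ Y q) :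
      y ∘ Prod.map σ id ∈ Y q := by
    have := hSym q σ⁻¹ hσ.inv _ hy
    rwa [inv_inv] at this
  let I : ℕ →o {I : Ideal (MvPolynomial (ℕ × Fin n) k) // IsIncStable I} :=
    ⟨fun q => ⟨vanishingIdeal k (Y q), isIncStable_vanishingIdeal (hYsym q)⟩,
      monotone_nat_of_le_succ fun q => vanishingIdeal_anti_mono fun _ hy => hchain q hy⟩
  obtain ⟨N, hN⟩ := wellFoundedGT_isIncStable.monotone_chain_condition I
  have hXN {q : ℕ} (hq : N ≤ q) : X q = X N := by
    have hYN : Y q = Y N := by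
      rw [← (hYcl q).zeroLocus_vanishingIdeal, ← (hYcl N).zeroLocus_vanishingIdeal]
      exact congrArg (zeroLocus k ·.1) (hN q hq).symm
    exact Set.preimage_injective.mpr (Equiv.surjective _) hYN
  exact ⟨N, fun q hq => (hXN hq).trans (hXN (hq.trans q.le_succ)).symm⟩

/-- **Sym-Noetherianity of `Z^ℕ` for a finite-dimensional affine variety `Z`.**
`Z` is a Zariski-closed subset of `Fin n → k`, and `Sym` (finitary permutations
of `ℕ`) acts on `Z^ℕ` by permuting the copies. Every descending chain of
`Sym`-stable closed subsets of `Z^ℕ` stabilises. -/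
theorem symNoetherianity_of_powers_of_affine_varieties
    {k : Type*} [Field k] [IsAlgClosed k] [CharZero k]
    (n : ℕ) (Z : Set (Fin n → k)) (hZcl : IsZClosed Z)
    (X : ℕ → Set (ℕ → Fin n → k))
    (hchain : ∀ q : ℕ, X (q + 1) ⊆ X q)
    (hclosed : ∀ q : ℕ, ∃ S : Set (MvPolynomial (ℕ × Fin n) k),
      X q = {x | (∀ s : ℕ, x s ∈ Z) ∧
        ∀ f ∈ S, MvPolynomial.eval (fun p : ℕ × Fin n => x p.1 p.2) f = 0})
    (hSym : ∀ (q : ℕ) (σ : Equiv.Perm ℕ), IsFinPerm σ →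
      ∀ x ∈ X q, (fun s => x (σ⁻¹ s)) ∈ X q) :
    ∃ N : ℕ, ∀ q : ℕ, N ≤ q → X q = X (q + 1) :=
  symNoetherianity_of_powers_of_affine_varieties_general n Z hZcl X hchain hclosed hSym
end
end

section
/- Let X be a Zariski-closed subset of the space of ℕ×ℕ matrices over k that is stable under Sym (acting by row permutations) and under GL (acting by right multiplication on columns). Suppose there exist n ≥ 1 and a nonzero polynomial f ∈ MvPolynomial (Fin n × Fin n) k such that for every A ∈ X, f evaluates to 0 at the top-left n×n block of A (the function (i, j) ↦ A i j for i, j ∈ Fin n). Then every matrix in X has rank at most n − 1: for every A ∈ X, every n×n submatrix of A is singular. -/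
noncomputable section

/-- `g : ℕ → ℕ → k` is a finitary invertible `ℕ×ℕ` matrix. -/
def IsFinGL {k : Type*} [Field k] (g : ℕ → ℕ → k) : Prop :=
  ∃ N : ℕ, (∀ i j : ℕ, N ≤ i ∨ N ≤ j → g i j = if i = j then 1 else 0) ∧
    IsUnit (Matrix.of fun i j : Fin N => g i.1 j.1)

/-- The action of `Sym` on `ℕ×ℕ` matrices by permuting rows. -/
def rowPerm {k : Type*} [Field k] (σ : Equiv.Perm ℕ) (A : ℕ → ℕ → k) : ℕ → ℕ → k :=
  fun i j => A (σ⁻¹ i) j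

/-- The action of `GL` on `ℕ×ℕ` matrices by right multiplication on columns:
`(A • g) i j = Σ_t A i t * g t j`, a finite sum since `g` is finitary. -/
def colMul {k : Type*} [Field k] (A : ℕ → ℕ → k) (g : ℕ → ℕ → k) : ℕ → ℕ → k :=
  fun i j => ∑ᶠ t : ℕ, A i t * g t j

/-- A subset of the space of `ℕ×ℕ` matrices is Zariski closed if it is the
common zero locus of a set of polynomials in the entries. -/
def IsZClosedMat {k : Type*} [Field k] (X : Set (ℕ → ℕ → k)) : Prop :=
  ∃ S : Set (MvPolynomial (ℕ × ℕ) k),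
    X = {A | ∀ f ∈ S, MvPolynomial.eval (fun p : ℕ × ℕ => A p.1 p.2) f = 0}

/-!
A row permutation and a column permutation move an invertible `n×n` submatrix `C` of some
`A ∈ X` to the top-left corner; right multiplication by the block matrix `C⁻¹ B ⊕ 1` then shows
that every invertible `B` is the top-left block of a matrix in `X`. Hence `f` vanishes wherever
the generic determinant does not, so `f * det` vanishes as a function and, `k` being infinite,
as a polynomial, forcing `f = 0`.
-/

open Matrix

theorem MvPolynomial.eq_zero_of_eval_eq_zero_of_eval_ne_zero {σ R : Type*} [CommRing R]
    [IsDomain R] [Infinite R] {f g : MvPolynomial σ R} (hg : g ≠ 0)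
    (h : ∀ x, eval x g ≠ 0 → eval x f = 0) : f = 0 := by
  have hfg : f * g = 0 := MvPolynomial.funext fun x => by
    by_cases hx : eval x g = 0 <;> simp [hx, h]
  exact (mul_eq_zero.1 hfg).resolve_right hg

theorem MvPolynomial.eq_zero_of_eval_eq_zero_of_det_ne_zero {m R : Type*} [Fintype m]
    [DecidableEq m] [CommRing R] [IsDomain R] [Infinite R] {f : MvPolynomial (m × m) R}
    (h : ∀ B : Matrix m m R, B.det ≠ 0 → eval (fun p => B p.1 p.2) f = 0) : f = 0 :=
  eq_zero_of_eval_eq_zero_of_eval_ne_zero (det_mvPolynomialX_ne_zero m R) fun x hx => by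
    rw [eval_det_mvPolynomialX] at hx
    exact h _ hx

lemma exists_le_forall_apply_lt {n : ℕ} (r : Fin n → ℕ) : ∃ N, n ≤ N ∧ ∀ i, r i < N := by
  obtain ⟨M, hM⟩ := (Set.finite_range r).bddAbove
  exact ⟨n + M + 1, by omega, fun i => by have := hM ⟨i, rfl⟩; omega⟩

lemma exists_isFinPerm_apply_eq {n : ℕ} {r : Fin n → ℕ} (hr : Function.Injective r) :
    ∃ σ : Equiv.Perm ℕ, IsFinPerm σ ∧ ∀ i, σ (r i) = i := by
  obtain ⟨N, hnN, hrN⟩ := exists_le_forall_apply_lt r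
  obtain ⟨τ, hτ⟩ := Equiv.Perm.exists_extending_pair (fun i => (⟨r i, hrN i⟩ : Fin N))
    (Fin.castLE hnN) (fun i j h => hr (by simpa using h)) (Fin.castLE_injective hnN)
  refine ⟨τ.extendDomain Fin.equivSubtype,
    ⟨N, fun x hx => Equiv.Perm.extendDomain_apply_not_subtype _ _ (not_lt.2 hx)⟩, fun i => ?_⟩
  simpa [hτ] using Equiv.Perm.extendDomain_apply_image τ Fin.equivSubtype ⟨r i, hrN i⟩

section

variable {k : Type*} [Field k] {X : Set (ℕ → ℕ → k)} {n : ℕ}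

def extendBlock {N : ℕ} (M : Matrix (Fin N) (Fin N) k) : ℕ → ℕ → k := fun t j =>
  if h : t < N ∧ j < N then M ⟨t, h.1⟩ ⟨j, h.2⟩ else if t = j then 1 else 0

lemma isFinGL_extendBlock {N : ℕ} {M : Matrix (Fin N) (Fin N) k} (hM : IsUnit M) :
    IsFinGL (extendBlock M) := by
  refine ⟨N, fun i j hij => dif_neg (by omega), ?_⟩
  convert hM
  ext i j
  simp [extendBlock]

lemma colMul_extendBlock_apply {N : ℕ} (A : ℕ → ℕ → k) (M : Matrix (Fin N) (Fin N) k)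
    (i : ℕ) (j : Fin N) : colMul A (extendBlock M) i j = ((fun t : Fin N => A i t) ᵥ* M) j := by
  have hsupp : Function.support (fun t => A i t * extendBlock M t j) ⊆ Finset.range N := by
    intro t ht
    by_contra htN
    simp only [Finset.coe_range, Set.mem_Iio] at htN
    apply ht
    simp [extendBlock, htN, show t ≠ j by omega]
  rw [colMul, finsum_eq_finsetSum_of_support_subset _ hsupp, Finset.sum_range]
  simp [vecMul, dotProduct, extendBlock]

lemma exists_mem_cols_eq_of_injective
    (hGL : ∀ g : ℕ → ℕ → k, IsFinGL g → ∀ A ∈ X, colMul A g ∈ X)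
    {A : ℕ → ℕ → k} (hA : A ∈ X) {c : Fin n → ℕ} (hc : Function.Injective c) :
    ∃ A' ∈ X, ∀ i (j : Fin n), A' i j = A i (c j) := by
  obtain ⟨N, hnN, hcN⟩ := exists_le_forall_apply_lt c
  obtain ⟨τ, hτ⟩ := Equiv.Perm.exists_extending_pair (Fin.castLE hnN)
    (fun j => (⟨c j, hcN j⟩ : Fin N)) (Fin.castLE_injective hnN)
    (fun i j h => hc (by simpa using h))
  have hP : IsUnit (τ⁻¹.permMatrix k) := (Group.isUnit τ).map (permMatrixHom (R := k))
  refine ⟨colMul A (extendBlock (τ⁻¹.permMatrix k)), hGL _ (isFinGL_extendBlock hP) A hA,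
    fun i j => ?_⟩
  simpa [vecMul_permMatrix, Equiv.Perm.inv_def, hτ] using
    colMul_extendBlock_apply A (τ⁻¹.permMatrix k) i (Fin.castLE hnN j)

theorem exists_mem_topLeft_eq
    (hSym : ∀ σ : Equiv.Perm ℕ, IsFinPerm σ → ∀ A ∈ X, rowPerm σ A ∈ X)
    (hGL : ∀ g : ℕ → ℕ → k, IsFinGL g → ∀ A ∈ X, colMul A g ∈ X)
    {A : ℕ → ℕ → k} (hA : A ∈ X) {r c : Fin n → ℕ} (hr : Function.Injective r)
    (hc : Function.Injective c) (hC : (of fun i j : Fin n => A (r i) (c j)).det ≠ 0)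
    {B : Matrix (Fin n) (Fin n) k} (hB : B.det ≠ 0) :
    ∃ A' ∈ X, ∀ i j : Fin n, A' i j = B i j := by
  set C : Matrix (Fin n) (Fin n) k := of fun i j => A (r i) (c j)
  obtain ⟨σ, hσ, hσr⟩ := exists_isFinPerm_apply_eq hr
  obtain ⟨A₁, hA₁, hA₁_cols⟩ := exists_mem_cols_eq_of_injective hGL (hSym σ hσ A hA) hc
  have hA₁C : ∀ i : Fin n, (fun t : Fin n => A₁ i t) = C i := fun i => by
    ext j
    simp [hA₁_cols, rowPerm, C, (Equiv.symm_apply_eq σ).2 (hσr i).symm]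
  have hCu : IsUnit C.det := isUnit_iff_ne_zero.2 hC
  have hM : IsUnit (C⁻¹ * B) := by
    rw [isUnit_iff_isUnit_det, det_mul]
    exact (isUnit_nonsing_inv_det C hCu).mul (isUnit_iff_ne_zero.2 hB)
  refine ⟨colMul A₁ (extendBlock (C⁻¹ * B)), hGL _ (isFinGL_extendBlock hM) A₁ hA₁, fun i j => ?_⟩
  rw [colMul_extendBlock_apply, hA₁C, ← mul_apply_eq_vecMul,
    mul_nonsing_inv_cancel_left _ _ hCu]

end

theorem rank_bound_of_equation_on_symGL_stable_closed_set_general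
    {k : Type*} [Field k] [IsAlgClosed k]
    (X : Set (ℕ → ℕ → k))
    (hSym : ∀ σ : Equiv.Perm ℕ, IsFinPerm σ → ∀ A ∈ X, rowPerm σ A ∈ X)
    (hGL : ∀ g : ℕ → ℕ → k, IsFinGL g → ∀ A ∈ X, colMul A g ∈ X)
    (n : ℕ)
    (f : MvPolynomial (Fin n × Fin n) k) (hf : f ≠ 0)
    (hvan : ∀ A ∈ X,
      MvPolynomial.eval (fun p : Fin n × Fin n => A p.1.1 p.2.1) f = 0) :
    ∀ A ∈ X, ∀ r cc : Fin n → ℕ, Function.Injective r → Function.Injective cc →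
      (Matrix.of fun i j : Fin n => A (r i) (cc j)).det = 0 := by
  intro A hA r cc hr hcc
  by_contra hC
  refine hf (MvPolynomial.eq_zero_of_eval_eq_zero_of_det_ne_zero fun B hB => ?_)
  obtain ⟨A', hA', hA'B⟩ := exists_mem_topLeft_eq hSym hGL hA hr hcc hC hB
  simpa only [hA'B] using hvan A' hA'

/-- If a `Sym × GL`-stable Zariski-closed set `X` of `ℕ×ℕ` matrices admits a
nonzero polynomial `f` in the entries of the top-left `n×n` block vanishing on
all of `X`, then every matrix in `X` has rank at most `n - 1`, i.e. all of its
`n×n` submatrices are singular. -/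
theorem rank_bound_of_equation_on_symGL_stable_closed_set
    {k : Type*} [Field k] [IsAlgClosed k] [CharZero k]
    (X : Set (ℕ → ℕ → k)) (hXcl : IsZClosedMat X)
    (hSym : ∀ σ : Equiv.Perm ℕ, IsFinPerm σ → ∀ A ∈ X, rowPerm σ A ∈ X)
    (hGL : ∀ g : ℕ → ℕ → k, IsFinGL g → ∀ A ∈ X, colMul A g ∈ X)
    (n : ℕ) (hn : 1 ≤ n)
    (f : MvPolynomial (Fin n × Fin n) k) (hf : f ≠ 0)
    (hvan : ∀ A ∈ X,
      MvPolynomial.eval (fun p : Fin n × Fin n => A p.1.1 p.2.1) f = 0) :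
    ∀ A ∈ X, ∀ r cc : Fin n → ℕ, Function.Injective r → Function.Injective cc →
      (Matrix.of fun i j : Fin n => A (r i) (cc j)).det = 0 :=
  rank_bound_of_equation_on_symGL_stable_closed_set_general X hSym hGL n f hf hvan
end
end

section
/- Let A : ℕ → ℕ → k be an ℕ×ℕ matrix of rank at least n, i.e. some n×n submatrix of A is invertible. Then for every invertible matrix M ∈ Matrix (Fin n) (Fin n) k there exist σ ∈ Sym and g ∈ GL such that ((σ • A) • g) i j = M i j for all i, j ∈ Fin n. In particular, the Sym × GL-orbit of A projects dominantly onto the space of top-left n×n blocks. -/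
noncomputable section

/-! Move the rows of an invertible `n×n` submatrix `B = A[r, c]` to the top with a finitary
permutation, then multiply on the right by a finitary invertible matrix that carries the columns
`c` to the first `n` positions and acts there by `B⁻¹ M`: a permutation matrix times the block
matrix `diag(B⁻¹ M, 1)`. The top-left block becomes `B (B⁻¹ M) = M`. -/

open Function Matrix

lemma exists_perm_fin_val_castAdd_eq {n : ℕ} {f : Fin n → ℕ} (hf : Injective f) :
    ∃ (m : ℕ) (π : Equiv.Perm (Fin (n + m))), ∀ i, (π (Fin.castAdd m i) : ℕ) = f i := by
  obtain ⟨b, hb⟩ := (Set.finite_range f).bddAbove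
  have hlt (i : Fin n) : f i < n + (b + 1) := by
    have := hb (Set.mem_range_self i)
    omega
  obtain ⟨π, hπ⟩ := Equiv.Perm.exists_extending_pair (Fin.castAdd (b + 1))
    (fun i => ⟨f i, hlt i⟩) (Fin.castAdd_injective _ _) fun i j h => hf (Fin.val_eq_of_eq h)
  exact ⟨b + 1, π, fun i => by rw [hπ]⟩

lemma IsFinPerm.inv_s7 {σ : Equiv.Perm ℕ} (hσ : IsFinPerm σ) : IsFinPerm σ⁻¹ := by
  obtain ⟨N, hN⟩ := hσ
  exact ⟨N, fun i hi => by rw [Equiv.Perm.inv_eq_iff_eq, hN i hi]⟩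

lemma isFinPerm_extendDomain_finEquivSubtype {N : ℕ} (π : Equiv.Perm (Fin N)) :
    IsFinPerm (π.extendDomain Fin.equivSubtype) :=
  ⟨N, fun _ hi => Equiv.Perm.extendDomain_apply_not_subtype _ _ (not_lt.2 hi)⟩

lemma exists_isFinPerm_inv_apply_eq {n : ℕ} {f : Fin n → ℕ} (hf : Injective f) :
    ∃ σ : Equiv.Perm ℕ, IsFinPerm σ ∧ ∀ i : Fin n, σ⁻¹ i = f i := by
  obtain ⟨m, π, hπ⟩ := exists_perm_fin_val_castAdd_eq hf
  refine ⟨(π.extendDomain Fin.equivSubtype)⁻¹, (isFinPerm_extendDomain_finEquivSubtype π).inv_s7,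
    fun i => ?_⟩
  simpa [hπ] using π.extendDomain_apply_image Fin.equivSubtype (Fin.castAdd m i)

lemma isUnit_fromBlocks_one {R ι κ : Type*} [CommRing R] [Fintype ι] [Fintype κ] [DecidableEq ι]
    [DecidableEq κ] {C : Matrix ι ι R} (hC : IsUnit C) :
    IsUnit (fromBlocks C 0 0 (1 : Matrix κ κ R)) := by
  rw [isUnit_iff_isUnit_det, det_fromBlocks_zero₂₁, det_one, mul_one]
  exact (isUnit_iff_isUnit_det C).1 hC

section FinitaryMatrix

variable {k : Type*} [Field k]

def extendById {N : ℕ} (G : Matrix (Fin N) (Fin N) k) : ℕ → ℕ → k :=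
  fun i j => if h : i < N ∧ j < N then G ⟨i, h.1⟩ ⟨j, h.2⟩ else if i = j then 1 else 0

lemma isFinGL_extendById {N : ℕ} {G : Matrix (Fin N) (Fin N) k} (hG : IsUnit G) :
    IsFinGL (extendById G) :=
  ⟨N, fun _ _ h => dif_neg (by omega), by convert hG; ext i j; simp [extendById]⟩

lemma colMul_extendById_apply {N : ℕ} (A : ℕ → ℕ → k) (G : Matrix (Fin N) (Fin N) k)
    (i : ℕ) (j : Fin N) : colMul A (extendById G) i j = ∑ t : Fin N, A i t * G t j := by
  have hsupp : support (fun t => A i t * extendById G t j) ⊆ Finset.range N := by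
    intro t ht
    by_contra htN
    have htj : t ≠ j := by simp at htN; omega
    simp_all [extendById]
  rw [colMul, finsum_eq_sum_of_support_subset _ hsupp, ← Fin.sum_univ_eq_sum_range]
  simp [extendById]

lemma exists_isFinGL_colMul_eq (A : ℕ → ℕ → k) {n : ℕ} {c : Fin n → ℕ} (hc : Injective c)
    {C : Matrix (Fin n) (Fin n) k} (hC : IsUnit C) :
    ∃ g, IsFinGL g ∧ ∀ i (j : Fin n), colMul A g i j = ∑ s, A i (c s) * C s j := by
  obtain ⟨m, π, hπ⟩ := exists_perm_fin_val_castAdd_eq hc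
  let e : Fin (n + m) ≃ Fin n ⊕ Fin m := π.symm.trans finSumFinEquiv.symm
  let F : Matrix (Fin n ⊕ Fin m) (Fin n ⊕ Fin m) k := fromBlocks C 0 0 1
  refine ⟨extendById (F.submatrix e finSumFinEquiv.symm),
    isFinGL_extendById ((isUnit_submatrix_equiv _ _).2 (isUnit_fromBlocks_one hC)),
    fun i j => ?_⟩
  calc colMul A (extendById (F.submatrix e finSumFinEquiv.symm)) i j
      = ∑ t, A i (e.symm (e t)) * F (e t) (.inl j) := by
        simpa using colMul_extendById_apply A (F.submatrix e finSumFinEquiv.symm) i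
          (Fin.castAdd m j)
    _ = ∑ x, A i (e.symm x) * F x (.inl j) := e.sum_comp fun x => A i (e.symm x) * F x (.inl j)
    _ = ∑ s, A i (c s) * C s j := by simp [F, e, hπ]

end FinitaryMatrix

theorem symGL_orbit_dominant_on_topleft_block_of_rank_ge_general
    {k : Type*} [Field k]
    (n : ℕ) (A : ℕ → ℕ → k)
    (hrk : ∃ r cc : Fin n → ℕ, Function.Injective r ∧ Function.Injective cc ∧
      IsUnit (Matrix.of fun i j : Fin n => A (r i) (cc j))) :
    ∀ M : Matrix (Fin n) (Fin n) k, IsUnit M →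
      ∃ (σ : Equiv.Perm ℕ) (g : ℕ → ℕ → k), IsFinPerm σ ∧ IsFinGL g ∧
        ∀ i j : Fin n, colMul (rowPerm σ A) g i.1 j.1 = M i j := by
  intro M hM
  obtain ⟨r, c, hr, hc, hB⟩ := hrk
  set B : Matrix (Fin n) (Fin n) k := Matrix.of fun i j => A (r i) (c j)
  obtain ⟨σ, hσ, hσr⟩ := exists_isFinPerm_inv_apply_eq hr
  obtain ⟨g, hg, hgc⟩ := exists_isFinGL_colMul_eq (rowPerm σ A) hc
    ((isUnit_nonsing_inv_iff.2 hB).mul hM)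
  refine ⟨σ, g, hσ, hg, fun i j => ?_⟩
  calc colMul (rowPerm σ A) g i j = (B * (B⁻¹ * M)) i j := by
        simp [hgc, rowPerm, hσr, B, mul_apply]
    _ = M i j := by rw [mul_nonsing_inv_cancel_left _ _ ((isUnit_iff_isUnit_det B).1 hB)]

/-- If an `ℕ×ℕ` matrix `A` has rank at least `n` (some `n×n` submatrix is
invertible), then the `Sym × GL`-orbit of `A` projects dominantly onto the
space of top-left `n×n` blocks: every invertible `n×n` matrix `M` arises as the
top-left `n×n` block of `(σ • A) • g` for some `σ ∈ Sym` and `g ∈ GL`. -/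
theorem symGL_orbit_dominant_on_topleft_block_of_rank_ge
    {k : Type*} [Field k] [IsAlgClosed k] [CharZero k]
    (n : ℕ) (A : ℕ → ℕ → k)
    (hrk : ∃ r cc : Fin n → ℕ, Function.Injective r ∧ Function.Injective cc ∧
      IsUnit (Matrix.of fun i j : Fin n => A (r i) (cc j))) :
    ∀ M : Matrix (Fin n) (Fin n) k, IsUnit M →
      ∃ (σ : Equiv.Perm ℕ) (g : ℕ → ℕ → k), IsFinPerm σ ∧ IsFinGL g ∧
        ∀ i j : Fin n, colMul (rowPerm σ A) g i.1 j.1 = M i j :=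
  symGL_orbit_dominant_on_topleft_block_of_rank_ge_general n A hrk
end
end

section
/- Let S denote the set of symmetric ℕ×ℕ matrices over k; S is stable under the congruence action of GL. Let X ⊆ S be stable under GL and closed in S, i.e., X is the intersection with S of a Zariski-closed subset of the space of ℕ×ℕ matrices. Then exactly one of the following holds: X = ∅, or X = S, or there exists r ∈ ℕ such that X = {A ∈ S : rank of A is at most r}, i.e., X consists of the symmetric matrices all of whose (r+1)×(r+1) submatrices are singular. -/
noncomputable section

/-- The congruence action of `GL` on `ℕ×ℕ` matrices:
`(g • A) i j = Σ_{s,t} g i s * g j t * A s t` (finite sums). -/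
def congAct {k : Type*} [Field k] (g : ℕ → ℕ → k) (A : ℕ → ℕ → k) : ℕ → ℕ → k :=
  fun i j => ∑ᶠ s : ℕ, ∑ᶠ t : ℕ, g i s * g j t * A s t

/-- The set of symmetric `ℕ×ℕ` matrices. -/
def SymMats (k : Type*) [Field k] : Set (ℕ → ℕ → k) := {A | ∀ i j : ℕ, A i j = A j i}

/-- The set of symmetric `ℕ×ℕ` matrices of rank at most `r`: all
`(r+1)×(r+1)` submatrices are singular. -/
def SymRankLe (k : Type*) [Field k] (r : ℕ) : Set (ℕ → ℕ → k) :=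
  {A | A ∈ SymMats k ∧ ∀ rr cc : Fin (r + 1) → ℕ,
    Function.Injective rr → Function.Injective cc →
      (Matrix.of fun i j : Fin (r + 1) => A (rr i) (cc j)).det = 0}

/-!
A symmetric matrix over an algebraically closed field of characteristic `≠ 2` is congruent to
`diag(1, …, 1, 0, …, 0)` with as many ones as its rank, and rescaling some of the ones by `√ε`
exhibits `diag(1^u, 0, …)` as the limit `ε → 0` of `diag(1^s, 0, …)` whenever `u ≤ s`. Since a
polynomial involves only finitely many entries, closedness can be tested on finite corners, and
on each corner the two facts combine: a closed `GL`-stable set containing `A` contains every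
symmetric `B` whose corners have rank at most the ranks of the corresponding corners of `A`.
Hence `X` is determined by the set of `u` with `diag(1^u, 0, …) ∈ X`, which is downward closed:
it is empty, all of `ℕ`, or `{0, …, r}`.
-/

open Function Finset

theorem Fin.exists_perm_apply_mem_iff_lt {n : ℕ} (s : Finset (Fin n)) :
    ∃ σ : Equiv.Perm (Fin n), ∀ i, σ i ∈ s ↔ (i : ℕ) < #s := by
  have hcard : Fintype.card {i : Fin n // (i : ℕ) < #s} = Fintype.card {i // i ∈ s} := by
    rw [Fintype.card_subtype, Fin.card_filter_val_lt, Fintype.card_coe,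
      min_eq_right (s.card_le_univ.trans_eq (Fintype.card_fin n))]
  let σ := (Fintype.equivOfCardEq hcard).extendSubtype
  refine ⟨σ, fun i => ⟨fun hi => ?_, fun hi => Equiv.extendSubtype_mem _ i hi⟩⟩
  by_contra hlt
  exact Equiv.extendSubtype_not_mem _ i hlt hi

namespace Matrix

variable {K : Type*} [Field K]

theorem exists_injective_linearIndependent_row_of_le_rank {m n : Type*} [Fintype m] [Fintype n]
    (A : Matrix m n K) {t : ℕ} (h : t ≤ A.rank) :
    ∃ f : Fin t → m, Injective f ∧ LinearIndependent K (A.submatrix f id).row := by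
  obtain ⟨κ, a, ha, hspan, hli⟩ := exists_linearIndependent' K A.row
  have : Finite κ := Finite.of_injective a ha
  have : Fintype κ := Fintype.ofFinite κ
  rw [rank_eq_finrank_span_row, ← hspan, ← Set.finrank,
    ← linearIndependent_iff_card_eq_finrank_span.mp hli] at h
  obtain ⟨e⟩ := Function.Embedding.nonempty_of_card_le (by simpa using h : Fintype.card (Fin t) ≤ _)
  exact ⟨a ∘ e, ha.comp e.injective, hli.comp e e.injective⟩

theorem exists_submatrix_det_ne_zero_of_le_rank {m n : Type*} [Fintype m] [Fintype n]
    (A : Matrix m n K) {t : ℕ} (h : t ≤ A.rank) :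
    ∃ (f : Fin t → m) (g : Fin t → n), Injective f ∧ Injective g ∧
      (A.submatrix f g).det ≠ 0 := by
  obtain ⟨f, hf, hrows⟩ := A.exists_injective_linearIndependent_row_of_le_rank h
  have hrank : (A.submatrix f id)ᵀ.rank = t := by
    rw [rank_transpose, hrows.rank_matrix, Fintype.card_fin]
  obtain ⟨g, hg, hcols⟩ :=
    (A.submatrix f id)ᵀ.exists_injective_linearIndependent_row_of_le_rank hrank.ge
  refine ⟨f, g, hf, hg, fun hdet => ?_⟩
  have hunit := linearIndependent_rows_iff_isUnit.mp hcols
  rw [isUnit_iff_isUnit_det, transpose_submatrix, submatrix_submatrix, ← transpose_submatrix,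
    det_transpose] at hunit
  exact not_isUnit_zero (hdet ▸ hunit)

theorem le_rank_of_submatrix_det_ne_zero {m n : Type*} [Fintype n] (A : Matrix m n K) {t : ℕ}
    (f : Fin t → m) (g : Fin t → n) (h : (A.submatrix f g).det ≠ 0) : t ≤ A.rank := by
  simpa [rank_of_det_ne_zero h] using A.rank_submatrix_le f g

theorem rank_mul_mul_transpose_of_isUnit {n : Type*} [Fintype n] [DecidableEq n]
    {P : Matrix n n K} (hP : IsUnit P) (A : Matrix n n K) : (P * A * Pᵀ).rank = A.rank := by
  have hdet := (isUnit_iff_isUnit_det P).mp hP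
  rw [rank_mul_eq_left_of_isUnit_det _ _ (by rwa [det_transpose]),
    rank_mul_eq_right_of_isUnit_det _ _ hdet]

def truncId (n u : ℕ) : Matrix (Fin n) (Fin n) K := diagonal fun i => if (i : ℕ) < u then 1 else 0

theorem rank_truncId (n u : ℕ) : (truncId n u : Matrix (Fin n) (Fin n) K).rank = min n u := by
  classical
  rw [truncId, rank_diagonal, ← Fin.card_filter_val_lt, Fintype.card_subtype]
  congr 1
  ext i
  simp

theorem IsSymm.exists_linearIndependent_orthogonal [Invertible (2 : K)] {n : ℕ}
    {A : Matrix (Fin n) (Fin n) K} (hA : A.IsSymm) :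
    ∃ v : Fin n → Fin n → K, LinearIndependent K v ∧ ∀ i j, i ≠ j → v i ⬝ᵥ A *ᵥ v j = 0 := by
  obtain ⟨b, hb⟩ := LinearMap.BilinForm.exists_orthogonal_basis
    (LinearMap.BilinForm.isSymm_iff.mp (isSymm_toBilin'_iff_isSymm.mpr hA))
  let e := finCongr (Module.finrank_fin_fun K (n := n))
  refine ⟨b ∘ e.symm, b.linearIndependent.comp _ e.symm.injective, fun i j hij => ?_⟩
  rw [← toBilin'_apply']
  exact hb (e.symm.injective.ne hij)

theorem IsSymm.exists_GL_mul_mul_transpose_eq_truncId [IsAlgClosed K] [NeZero (2 : K)] {n : ℕ}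
    {A : Matrix (Fin n) (Fin n) K} (hA : A.IsSymm) :
    ∃ P : GL (Fin n) K, (P : Matrix _ _ K) * A * (P : Matrix _ _ K)ᵀ = truncId n A.rank := by
  classical
  have : Invertible (2 : K) := invertibleOfNonzero two_ne_zero
  obtain ⟨v, hv, horth⟩ := hA.exists_linearIndependent_orthogonal
  -- put the vectors on which the form is nonzero first, then normalise them
  obtain ⟨σ, hσ⟩ := Fin.exists_perm_apply_mem_iff_lt {i | v i ⬝ᵥ A *ᵥ v i ≠ 0}
  set u := #{i | v i ⬝ᵥ A *ᵥ v i ≠ 0}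
  have hsqrt : ∀ i : Fin n, ∃ c : Kˣ,
      (i : ℕ) < u → (c : K) ^ 2 * (v (σ i) ⬝ᵥ A *ᵥ v (σ i)) = 1 := by
    intro i
    by_cases hi : (i : ℕ) < u
    · have hd : v (σ i) ⬝ᵥ A *ᵥ v (σ i) ≠ 0 := by simpa using (hσ i).mpr hi
      obtain ⟨z, hz⟩ := IsAlgClosed.exists_pow_nat_eq (v (σ i) ⬝ᵥ A *ᵥ v (σ i))⁻¹ two_pos
      have hz0 : z ≠ 0 := by rintro rfl; exact hd (by simpa using hz.symm)
      exact ⟨Units.mk0 z hz0, fun _ => by simp [hz, hd]⟩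
    · exact ⟨1, fun h => absurd h hi⟩
  choose c hc using hsqrt
  let w : Fin n → Fin n → K := c • (v ∘ σ)
  have hw : IsUnit (Matrix.of w) :=
    linearIndependent_rows_iff_isUnit.mp ((hv.comp σ σ.injective).units_smul c)
  have hPA : of w * A * (of w)ᵀ = truncId n u := by
    ext i j
    rw [mul_mul_apply, transpose_transpose]
    change w i ⬝ᵥ A *ᵥ w j = _
    simp only [w, Pi.smul_apply', Units.smul_def, smul_dotProduct,
      mulVec_smul, dotProduct_smul, smul_eq_mul, truncId]
    rcases eq_or_ne i j with rfl | hij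
    · by_cases hi : (i : ℕ) < u
      · simp [hi, ← hc i hi, sq, mul_assoc]
      · have hd : v (σ i) ⬝ᵥ A *ᵥ v (σ i) = 0 := by simpa [hi] using (hσ i).not
        simp [hi, hd]
    · simp [horth _ _ (σ.injective.ne hij), hij]
  have hrank : A.rank = u := by
    rw [← rank_mul_mul_transpose_of_isUnit hw, hPA, rank_truncId,
      min_eq_right (card_le_univ _ |>.trans_eq (Fintype.card_fin n))]
  exact ⟨hw.unit, by rw [IsUnit.unit_spec, hrank, hPA]⟩

theorem exists_GL_mul_truncId_mul_transpose_eq [IsAlgClosed K] {n u s : ℕ} (hus : u ≤ s)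
    {ε : K} (hε : ε ≠ 0) :
    ∃ S : GL (Fin n) K, (S : Matrix _ _ K) * truncId n s * (S : Matrix _ _ K)ᵀ =
      truncId n u + ε • (truncId n s - truncId n u) := by
  obtain ⟨z, hz⟩ := IsAlgClosed.exists_pow_nat_eq ε two_pos
  have hz0 : z ≠ 0 := by rintro rfl; exact hε (by simpa using hz.symm)
  let c : Fin n → K := fun i => if (i : ℕ) < u then 1 else z
  have hc : IsUnit (diagonal c) := isUnit_diagonal.mpr <| Pi.isUnit_iff.mpr fun i => by
    by_cases hi : (i : ℕ) < u <;> simp [c, hi, hz0]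
  refine ⟨hc.unit, ?_⟩
  rw [IsUnit.unit_spec, truncId, truncId, diagonal_transpose, diagonal_mul_diagonal,
    diagonal_mul_diagonal, diagonal_sub, ← diagonal_smul, diagonal_add]
  congr 1
  funext i
  by_cases hu : (i : ℕ) < u
  · simp [c, hu, hu.trans_le hus]
  · by_cases hs : (i : ℕ) < s <;> simp [c, hu, hs, ← hz, sq]

theorem IsSymm.exists_GL_mul_mul_transpose_eq_add_smul [IsAlgClosed K] [NeZero (2 : K)] {n : ℕ}
    {A B : Matrix (Fin n) (Fin n) K} (hA : A.IsSymm) (hB : B.IsSymm) (h : B.rank ≤ A.rank) :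
    ∃ D : Matrix (Fin n) (Fin n) K, ∀ ε : K, ε ≠ 0 → ∃ P : GL (Fin n) K,
      (P : Matrix _ _ K) * A * (P : Matrix _ _ K)ᵀ = B + ε • D := by
  obtain ⟨PA, hPA⟩ := hA.exists_GL_mul_mul_transpose_eq_truncId
  obtain ⟨PB, hPB⟩ := hB.exists_GL_mul_mul_transpose_eq_truncId
  set R : Matrix (Fin n) (Fin n) K := ↑PB⁻¹
  have hB' : B = R * truncId n B.rank * Rᵀ := by
    rw [← hPB, ← mul_assoc, ← mul_assoc, mul_assoc _ _ Rᵀ, ← transpose_mul]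
    simp [R]
  refine ⟨R * (truncId n A.rank - truncId n B.rank) * Rᵀ, fun ε hε => ?_⟩
  obtain ⟨S, hS⟩ := exists_GL_mul_truncId_mul_transpose_eq (n := n) h hε
  refine ⟨PB⁻¹ * S * PA, ?_⟩
  calc _ = R * ((S : Matrix _ _ K) * ((PA : Matrix _ _ K) * A * (PA : Matrix _ _ K)ᵀ) *
          (S : Matrix _ _ K)ᵀ) * Rᵀ := by
        simp only [Units.val_mul, transpose_mul, mul_assoc, R]
    _ = B + ε • (R * (truncId n A.rank - truncId n B.rank) * Rᵀ) := by
        rw [hPA, hS, mul_add, add_mul, mul_smul_comm, smul_mul_assoc, ← hB']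

end Matrix

namespace MvPolynomial

theorem eval_eq_zero_of_forall_ne_zero_eval_add_smul {σ R : Type*} [CommRing R] [IsDomain R]
    [Infinite R] (f : MvPolynomial σ R) (x y : σ → R)
    (h : ∀ ε : R, ε ≠ 0 → eval (x + ε • y) f = 0) : eval x f = 0 := by
  let φ : Polynomial R := eval₂ Polynomial.C (fun s => .C (x s) + .C (y s) * .X) f
  have hφ : ∀ ε, φ.eval ε = eval (x + ε • y) f := by
    intro ε
    rw [polynomial_eval_eval₂]
    congr 1
    · exact RingHom.ext fun _ => Polynomial.eval_C
    · funext s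
      simp only [Polynomial.eval_add, Polynomial.eval_mul, Polynomial.eval_C, Polynomial.eval_X,
        Pi.add_apply, Pi.smul_apply, smul_eq_mul, mul_comm]
  have hφ0 : φ = 0 := φ.eq_zero_of_infinite_isRoot <|
    (Set.finite_singleton (0 : R)).infinite_compl.mono fun ε hε => by
      simpa [hφ] using h ε hε
  have h0 := hφ 0
  rwa [hφ0, Polynomial.eval_zero, zero_smul, add_zero, eq_comm] at h0

end MvPolynomial

open Matrix

section InfiniteMatrices

variable {k : Type*}

def corner (n : ℕ) (A : ℕ → ℕ → k) : Matrix (Fin n) (Fin n) k := Matrix.of fun i j => A i j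

@[simp]
theorem corner_apply (n : ℕ) (A : ℕ → ℕ → k) (i j : Fin n) : corner n A i j = A i j := rfl

variable [Field k]

theorem rank_corner_le_of_le (A : ℕ → ℕ → k) {m n : ℕ} (h : m ≤ n) :
    (corner m A).rank ≤ (corner n A).rank :=
  (corner n A).rank_submatrix_le (Fin.castLE h) (Fin.castLE h)

theorem isSymm_corner {A : ℕ → ℕ → k} (hA : A ∈ SymMats k) (n : ℕ) : (corner n A).IsSymm :=
  IsSymm.ext fun i j => hA j i

def extendByOne {n : ℕ} (Q : Matrix (Fin n) (Fin n) k) : ℕ → ℕ → k :=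
  fun i j => if h : i < n ∧ j < n then Q ⟨i, h.1⟩ ⟨j, h.2⟩ else if i = j then 1 else 0

@[simp]
theorem extendByOne_apply_fin {n : ℕ} (Q : Matrix (Fin n) (Fin n) k) (i j : Fin n) :
    extendByOne Q i j = Q i j := by
  simp [extendByOne]

theorem extendByOne_eq_zero {n : ℕ} (Q : Matrix (Fin n) (Fin n) k) {i j : ℕ} (hi : i < n)
    (hj : n ≤ j) : extendByOne Q i j = 0 := by
  simp [extendByOne, hj.not_gt, (hi.trans_le hj).ne]

theorem isFinGL_extendByOne {n : ℕ} {Q : Matrix (Fin n) (Fin n) k} (hQ : IsUnit Q) :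
    IsFinGL (extendByOne Q) := by
  refine ⟨n, fun i j h => ?_, by convert hQ using 1; ext i j; simp⟩
  have : ¬(i < n ∧ j < n) := by omega
  simp [extendByOne, this]

theorem corner_congAct_extendByOne {n : ℕ} (Q : Matrix (Fin n) (Fin n) k) (A : ℕ → ℕ → k) :
    corner n (congAct (extendByOne Q) A) = Q * corner n A * Qᵀ := by
  ext i j
  have hinner : ∀ s, ∑ᶠ t, extendByOne Q i s * extendByOne Q j t * A s t =
      ∑ t ∈ range n, extendByOne Q i s * extendByOne Q j t * A s t := fun s =>
    finsum_eq_sum_of_support_subset _ fun t ht => by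
      by_contra hnt
      simp_all [extendByOne_eq_zero Q j.2 (by simpa using hnt)]
  have houter : ∑ᶠ s, ∑ᶠ t, extendByOne Q i s * extendByOne Q j t * A s t =
      ∑ s ∈ range n, ∑ t ∈ range n, extendByOne Q i s * extendByOne Q j t * A s t := by
    simp only [hinner]
    exact finsum_eq_sum_of_support_subset _ fun s hs => by
      by_contra hns
      simp_all [extendByOne_eq_zero Q i.2 (by simpa using hns)]
  rw [corner_apply, congAct, houter, mul_mul_apply, transpose_transpose]
  simp only [sum_range, extendByOne_apply_fin, dotProduct, mulVec, mul_sum, corner_apply]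
  exact sum_congr rfl fun s _ => sum_congr rfl fun t _ => by ring

def infTruncId (u : ℕ) : ℕ → ℕ → k := fun i j => if i = j ∧ i < u then 1 else 0

@[simp]
theorem corner_infTruncId (n u : ℕ) : corner n (infTruncId u : ℕ → ℕ → k) = truncId n u := by
  ext i j
  simp [infTruncId, truncId, diagonal_apply, Fin.ext_iff, ite_and]

theorem infTruncId_mem_symMats (u : ℕ) : (infTruncId u : ℕ → ℕ → k) ∈ SymMats k := by
  intro i j
  simp only [infTruncId, eq_comm (a := i)]
  by_cases h : j = i <;> simp [h]

theorem mem_symRankLe_iff {A : ℕ → ℕ → k} {r : ℕ} :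
    A ∈ SymRankLe k r ↔ A ∈ SymMats k ∧ ∀ n, (corner n A).rank ≤ r := by
  refine and_congr_right fun _ => ⟨fun hminors n => ?_, fun hrank rr cc _ _ => ?_⟩
  · by_contra! hlt
    obtain ⟨f, g, hf, hg, hdet⟩ := (corner n A).exists_submatrix_det_ne_zero_of_le_rank hlt
    exact hdet (hminors _ _ (Fin.val_injective.comp hf) (Fin.val_injective.comp hg))
  · by_contra hdet
    obtain ⟨N, hN⟩ := Finite.exists_le fun i => max (rr i) (cc i)
    have hlt : ∀ i, rr i < N + 1 ∧ cc i < N + 1 := fun i => by have := hN i; omega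
    have := (corner (N + 1) A).le_rank_of_submatrix_det_ne_zero (fun i => ⟨rr i, (hlt i).1⟩)
      (fun i => ⟨cc i, (hlt i).2⟩) hdet
    linarith [hrank (N + 1)]

theorem infTruncId_mem_symRankLe_iff {u r : ℕ} :
    (infTruncId u : ℕ → ℕ → k) ∈ SymRankLe k r ↔ u ≤ r := by
  simp only [mem_symRankLe_iff, corner_infTruncId, rank_truncId, infTruncId_mem_symMats, true_and]
  exact ⟨fun h => by simpa using h u, fun h n => (min_le_right n u).trans h⟩

theorem IsZClosedMat.mem_of_forall_exists_corner_eq_add_smul [Infinite k]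
    {C : Set (ℕ → ℕ → k)} (hC : IsZClosedMat C) {B : ℕ → ℕ → k}
    (h : ∀ N, ∃ M ≥ N, ∃ D : Matrix (Fin M) (Fin M) k,
      ∀ ε : k, ε ≠ 0 → ∃ A ∈ C, corner M A = corner M B + ε • D) :
    B ∈ C := by
  obtain ⟨S, rfl⟩ := hC
  intro f hf
  obtain ⟨N, hN⟩ := (f.vars.image fun p => max p.1 p.2).exists_nat_subset_range
  obtain ⟨M, hMN, D, hD⟩ := h N
  have hvars : ∀ p ∈ f.vars, p.1 < M ∧ p.2 < M := fun p hp => by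
    have := mem_range.mp (hN (mem_image_of_mem _ hp))
    omega
  let y : ℕ × ℕ → k := fun p => if hp : p.1 < M ∧ p.2 < M then D ⟨p.1, hp.1⟩ ⟨p.2, hp.2⟩ else 0
  refine f.eval_eq_zero_of_forall_ne_zero_eval_add_smul _ y fun ε hε => ?_
  obtain ⟨A, hA, hAB⟩ := hD ε hε
  rw [← hA f hf]
  refine MvPolynomial.eval₂Hom_congr' rfl (fun p hp _ => ?_) rfl
  have := congrFun₂ hAB ⟨p.1, (hvars p hp).1⟩ ⟨p.2, (hvars p hp).2⟩
  simp_all [y]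

end InfiniteMatrices

section StableSets

variable {k : Type*} [Field k]

def IsGLStable (X : Set (ℕ → ℕ → k)) : Prop :=
  ∀ g : ℕ → ℕ → k, IsFinGL g → ∀ A ∈ X, congAct g A ∈ X

def IsClosedInSymMats (X : Set (ℕ → ℕ → k)) : Prop :=
  ∃ C : Set (ℕ → ℕ → k), IsZClosedMat C ∧ X = SymMats k ∩ C

theorem IsClosedInSymMats.subset_symMats {X : Set (ℕ → ℕ → k)} (hX : IsClosedInSymMats X) :
    X ⊆ SymMats k := by
  obtain ⟨C, -, rfl⟩ := hX
  exact Set.inter_subset_left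

variable [IsAlgClosed k] [NeZero (2 : k)] {X : Set (ℕ → ℕ → k)}

theorem mem_of_forall_exists_rank_corner_le
    (hGL : IsGLStable X) (hcl : IsClosedInSymMats X) {B : ℕ → ℕ → k} (hB : B ∈ SymMats k)
    (h : ∀ N, ∃ M ≥ N, ∃ A ∈ X, (corner M B).rank ≤ (corner M A).rank) : B ∈ X := by
  obtain ⟨C, hC, rfl⟩ := hcl
  refine ⟨hB, hC.mem_of_forall_exists_corner_eq_add_smul fun N => ?_⟩
  obtain ⟨M, hMN, A, hA, hrank⟩ := h N
  obtain ⟨D, hD⟩ :=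
    (isSymm_corner hA.1 M).exists_GL_mul_mul_transpose_eq_add_smul (isSymm_corner hB M) hrank
  refine ⟨M, hMN, D, fun ε hε => ?_⟩
  obtain ⟨P, hP⟩ := hD ε hε
  refine ⟨congAct (extendByOne (P : Matrix (Fin M) (Fin M) k)) A,
    (hGL _ (isFinGL_extendByOne P.isUnit) A hA).2, ?_⟩
  rw [corner_congAct_extendByOne, hP]

theorem infTruncId_rank_corner_mem
    (hGL : IsGLStable X) (hcl : IsClosedInSymMats X) {A : ℕ → ℕ → k} (hA : A ∈ X) (M : ℕ) :
    infTruncId (corner M A).rank ∈ X :=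
  mem_of_forall_exists_rank_corner_le hGL hcl (infTruncId_mem_symMats _) fun N =>
    ⟨max N M, le_max_left _ _, A, hA, by
      rw [corner_infTruncId, rank_truncId]
      exact (min_le_right _ _).trans (rank_corner_le_of_le A (le_max_right _ _))⟩

theorem infTruncId_mem_of_le
    (hGL : IsGLStable X) (hcl : IsClosedInSymMats X) {s u : ℕ} (hs : infTruncId s ∈ X)
    (hus : u ≤ s) : infTruncId u ∈ X := by
  simpa [rank_truncId, hus] using infTruncId_rank_corner_mem hGL hcl hs u

theorem mem_of_forall_infTruncId_rank_corner_mem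
    (hGL : IsGLStable X) (hcl : IsClosedInSymMats X) {B : ℕ → ℕ → k} (hB : B ∈ SymMats k)
    (h : ∀ N, infTruncId (corner N B).rank ∈ X) : B ∈ X :=
  mem_of_forall_exists_rank_corner_le hGL hcl hB fun N => ⟨N, le_rfl, _, h N, by
    rw [corner_infTruncId, rank_truncId, min_eq_right (corner N B).rank_le_width]⟩

end StableSets

theorem classification_GL_stable_closed_subsets_of_symmetric_matrices_general
    {k : Type*} [Field k] [IsAlgClosed k] [CharZero k]
    (X : Set (ℕ → ℕ → k))
    (hGL : ∀ g : ℕ → ℕ → k, IsFinGL g → ∀ A ∈ X, congAct g A ∈ X)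
    (hcl : ∃ C : Set (ℕ → ℕ → k), IsZClosedMat C ∧ X = SymMats k ∩ C) :
    (X = ∅ ∧ X ≠ SymMats k ∧ ¬∃ r : ℕ, X = SymRankLe k r) ∨
    (X ≠ ∅ ∧ X = SymMats k ∧ ¬∃ r : ℕ, X = SymRankLe k r) ∨
    (X ≠ ∅ ∧ X ≠ SymMats k ∧ ∃ r : ℕ, X = SymRankLe k r) := by
  have hXS : X ⊆ SymMats k := IsClosedInSymMats.subset_symMats hcl
  rcases X.eq_empty_or_nonempty with rfl | ⟨A, hA⟩
  · exact Or.inl ⟨rfl, fun h => (Set.nonempty_of_mem (infTruncId_mem_symMats 0)).ne_empty h.symm,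
      fun ⟨r, hr⟩ =>
        (Set.nonempty_of_mem (infTruncId_mem_symRankLe_iff.mpr r.zero_le)).ne_empty hr.symm⟩
  have hXne : X ≠ ∅ := (Set.nonempty_of_mem hA).ne_empty
  have hE0 : infTruncId 0 ∈ X := by
    simpa [Nat.eq_zero_of_le_zero (corner 0 A).rank_le_width] using
      infTruncId_rank_corner_mem hGL hcl hA 0
  by_cases hall : ∀ t, infTruncId t ∈ X
  · have hX : X = SymMats k := hXS.antisymm fun B hB =>
      mem_of_forall_infTruncId_rank_corner_mem hGL hcl hB fun N => hall _
    refine Or.inr (Or.inl ⟨hXne, hX, fun ⟨r, hr⟩ => ?_⟩)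
    have := infTruncId_mem_symRankLe_iff.mp (hr ▸ hX ▸ infTruncId_mem_symMats (k := k) (r + 1))
    omega
  obtain ⟨r, hr, hr1⟩ : ∃ r, infTruncId r ∈ X ∧ infTruncId (r + 1) ∉ X := by
    by_contra! h
    exact hall fun t => Nat.rec hE0 h t
  have hX : X = SymRankLe k r := by
    ext B
    rw [mem_symRankLe_iff]
    refine ⟨fun hB => ⟨hXS hB, fun N => ?_⟩, fun ⟨hB, hrank⟩ =>
      mem_of_forall_infTruncId_rank_corner_mem hGL hcl hB fun N =>
        infTruncId_mem_of_le hGL hcl hr (hrank N)⟩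
    by_contra! hN
    exact hr1 (infTruncId_mem_of_le hGL hcl (infTruncId_rank_corner_mem hGL hcl hB N) hN)
  exact Or.inr (Or.inr ⟨hXne, fun h => hr1 (h ▸ infTruncId_mem_symMats (r + 1)), r, hX⟩)

/-- **Classification of GL-stable closed subsets of the space of symmetric
matrices**: such a subset is empty, everything, or a rank-bounded set; and
exactly one of these three alternatives holds. -/
theorem classification_GL_stable_closed_subsets_of_symmetric_matrices
    {k : Type*} [Field k] [IsAlgClosed k] [CharZero k]
    (X : Set (ℕ → ℕ → k)) (hXS : X ⊆ SymMats k)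
    (hGL : ∀ g : ℕ → ℕ → k, IsFinGL g → ∀ A ∈ X, congAct g A ∈ X)
    (hcl : ∃ C : Set (ℕ → ℕ → k), IsZClosedMat C ∧ X = SymMats k ∩ C) :
    (X = ∅ ∧ X ≠ SymMats k ∧ ¬∃ r : ℕ, X = SymRankLe k r) ∨
    (X ≠ ∅ ∧ X = SymMats k ∧ ¬∃ r : ℕ, X = SymRankLe k r) ∨
    (X ≠ ∅ ∧ X ≠ SymMats k ∧ ∃ r : ℕ, X = SymRankLe k r) :=
  classification_GL_stable_closed_subsets_of_symmetric_matrices_general X hGL hcl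
end
end

section
/- For every family (A_s)_{s ∈ ℕ} of ℕ×ℕ matrices over k, the following are equivalent: (i) for every s ∈ ℕ, the matrix A_s is symmetric or skew-symmetric; (ii) for every s ∈ ℕ and every g ∈ GL, writing B := g • A_s for the congruence action, one has (B 0 1 + B 1 0) · (B 0 1 − B 1 0) = 0. In other words, the set of tuples of matrices each of which is symmetric or skew-symmetric is defined inside the space of ℕ-tuples of ℕ×ℕ matrices by the Sym × GL-orbit of the single polynomial equation (x_{1,1,2} + x_{1,2,1})(x_{1,1,2} − x_{1,2,1}), where x_{s,i,j} denotes the (i,j)-entry of the s-th matrix. -/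
noncomputable section

/-! ### Auxiliary machinery -/

namespace SymSkewAux

variable {k : Type*} [Field k]

/-- A finite double-sum bilinear form. -/
def dsum (M : ℕ) (A : ℕ → ℕ → k) (u v : ℕ → k) : k :=
  ∑ s ∈ Finset.range M, ∑ t ∈ Finset.range M, u s * v t * A s t

lemma finsum_double_eq (M : ℕ) (A : ℕ → ℕ → k) (u v : ℕ → k)
    (hu : ∀ n, M ≤ n → u n = 0) (hv : ∀ n, M ≤ n → v n = 0) :
    (∑ᶠ s : ℕ, ∑ᶠ t : ℕ, u s * v t * A s t) = dsum M A u v := by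
  have hinner : ∀ s : ℕ, (∑ᶠ t : ℕ, u s * v t * A s t)
      = ∑ t ∈ Finset.range M, u s * v t * A s t := by
    intro s
    apply finsum_eq_sum_of_support_subset
    intro t ht
    simp only [Function.mem_support] at ht
    simp only [Finset.coe_range, Set.mem_Iio]
    by_contra h
    exact ht (by rw [hv t (le_of_not_gt h)]; ring)
  rw [finsum_congr hinner]
  apply finsum_eq_sum_of_support_subset
  intro s hs
  simp only [Function.mem_support] at hs
  simp only [Finset.coe_range, Set.mem_Iio]
  by_contra h
  apply hs
  apply Finset.sum_eq_zero
  intro t _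
  rw [hu s (le_of_not_gt h)]; ring

lemma dsum_symm_of_symm (M : ℕ) (A : ℕ → ℕ → k) (hA : ∀ x y, A x y = A y x)
    (u v : ℕ → k) : dsum M A u v = dsum M A v u := by
  unfold dsum
  rw [Finset.sum_comm]
  apply Finset.sum_congr rfl; intro s _; apply Finset.sum_congr rfl; intro t _
  rw [hA t s]; ring

lemma dsum_neg_of_skew (M : ℕ) (A : ℕ → ℕ → k) (hA : ∀ x y, A x y = - A y x)
    (u v : ℕ → k) : dsum M A u v = - dsum M A v u := by
  unfold dsum
  rw [Finset.sum_comm, ← Finset.sum_neg_distrib]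
  apply Finset.sum_congr rfl; intro s _
  rw [← Finset.sum_neg_distrib]
  apply Finset.sum_congr rfl; intro t _
  rw [hA t s]; ring

lemma dsum_add_left (M : ℕ) (A : ℕ → ℕ → k) (u w v : ℕ → k) :
    dsum M A (fun n => u n + w n) v = dsum M A u v + dsum M A w v := by
  unfold dsum
  rw [← Finset.sum_add_distrib]
  apply Finset.sum_congr rfl; intro s _
  rw [← Finset.sum_add_distrib]
  apply Finset.sum_congr rfl; intro t _; ring

lemma dsum_add_right (M : ℕ) (A : ℕ → ℕ → k) (u v w : ℕ → k) :
    dsum M A u (fun n => v n + w n) = dsum M A u v + dsum M A u w := by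
  unfold dsum
  rw [← Finset.sum_add_distrib]
  apply Finset.sum_congr rfl; intro s _
  rw [← Finset.sum_add_distrib]
  apply Finset.sum_congr rfl; intro t _; ring

lemma dsum_smul_left (M : ℕ) (A : ℕ → ℕ → k) (c : k) (u v : ℕ → k) :
    dsum M A (fun n => c * u n) v = c * dsum M A u v := by
  unfold dsum
  rw [Finset.mul_sum]
  apply Finset.sum_congr rfl; intro s _
  rw [Finset.mul_sum]
  apply Finset.sum_congr rfl; intro t _; ring

lemma dsum_smul_right (M : ℕ) (A : ℕ → ℕ → k) (c : k) (u v : ℕ → k) :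
    dsum M A u (fun n => c * v n) = c * dsum M A u v := by
  unfold dsum
  rw [Finset.mul_sum]
  apply Finset.sum_congr rfl; intro s _
  rw [Finset.mul_sum]
  apply Finset.sum_congr rfl; intro t _; ring

/-- A "standard basis vector". -/
def sbv (x : ℕ) : ℕ → k := fun n => if n = x then 1 else 0

lemma dsum_sbv_sbv (M : ℕ) (A : ℕ → ℕ → k) (x y : ℕ) (hx : x < M) (hy : y < M) :
    dsum M A (sbv x) (sbv y) = A x y := by
  unfold dsum sbv
  rw [Finset.sum_eq_single x]
  · rw [Finset.sum_eq_single y]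
    · simp
    · intro t _ ht; simp [ht]
    · intro h; exact absurd (Finset.mem_range.2 hy) h
  · intro s _ hs
    apply Finset.sum_eq_zero; intro t _; simp [hs]
  · intro h; exact absurd (Finset.mem_range.2 hx) h

lemma dsum_expand (M : ℕ) (B : ℕ → ℕ → k) (i p j q : ℕ)
    (hi : i < M) (hp : p < M) (hj : j < M) (hq : q < M) (x y : k) :
    dsum M B (fun n => sbv i n + x * sbv p n) (fun n => sbv j n + y * sbv q n)
      = B i j + y * B i q + x * B p j + x * (y * B p q) := by
  rw [dsum_add_left, dsum_smul_left, dsum_add_right, dsum_add_right,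
    dsum_smul_right, dsum_smul_right,
    dsum_sbv_sbv M B i j hi hj, dsum_sbv_sbv M B i q hi hq,
    dsum_sbv_sbv M B p j hp hj, dsum_sbv_sbv M B p q hp hq]
  ring

lemma dep_of_minors (u v : ℕ → k) (h : ∀ c d, u c * v d = u d * v c) :
    (∃ c : k, ∀ n, v n = c * u n) ∨ (∃ c : k, ∀ n, u n = c * v n) := by
  by_cases hu : ∀ n, u n = 0
  · right; exact ⟨0, fun n => by rw [hu n]; ring⟩
  · push_neg at hu
    obtain ⟨c₀, hc₀⟩ := hu
    left
    refine ⟨v c₀ / u c₀, fun n => ?_⟩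
    field_simp
    linear_combination - h n c₀

lemma poly2 {k : Type*} [Field k] [Infinite k] (α β γ δ α' β' γ' δ' : k)
    (h : ∀ s t : k, (α + β * s + γ * t + δ * (s * t)) *
      (α' + β' * s + γ' * t + δ' * (s * t)) = 0) :
    α = 0 ∨ δ' = 0 := by
  set P : MvPolynomial (Fin 2) k :=
    MvPolynomial.C α + MvPolynomial.C β * MvPolynomial.X 0 +
      MvPolynomial.C γ * MvPolynomial.X 1 +
      MvPolynomial.C δ * (MvPolynomial.X 0 * MvPolynomial.X 1) with hP
  set Q : MvPolynomial (Fin 2) k :=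
    MvPolynomial.C α' + MvPolynomial.C β' * MvPolynomial.X 0 +
      MvPolynomial.C γ' * MvPolynomial.X 1 +
      MvPolynomial.C δ' * (MvPolynomial.X 0 * MvPolynomial.X 1) with hQ
  have hPQ : P * Q = 0 := by
    apply MvPolynomial.funext
    intro x
    simp only [hP, hQ, map_mul, map_add, MvPolynomial.eval_C, MvPolynomial.eval_X, map_zero]
    exact h (x 0) (x 1)
  rcases mul_eq_zero.1 hPQ with h0 | h0
  · left
    have := congrArg (MvPolynomial.eval (fun _ : Fin 2 => (0 : k))) h0
    simpa [hP] using this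
  · right
    have e : ∀ x : Fin 2 → k, α' + β' * x 0 + γ' * x 1 + δ' * (x 0 * x 1) = 0 := by
      intro x
      have := congrArg (MvPolynomial.eval x) h0
      simpa [hQ] using this
    have e00 := e ![0, 0]
    have e10 := e ![1, 0]
    have e01 := e ![0, 1]
    have e11 := e ![1, 1]
    simp at e00 e10 e01 e11
    linear_combination e11 - e10 - e01 + e00

/-- Given vectors u v supported in [0,M) with an invertible 2×2 minor at columns c,d,
build a finitary invertible matrix with rows 0,1 equal to u,v. -/
lemma exists_finGL (M c d : ℕ) (u v : ℕ → k)
    (hu : ∀ n, M ≤ n → u n = 0) (hv : ∀ n, M ≤ n → v n = 0)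
    (hm : u c * v d - u d * v c ≠ 0) :
    ∃ g : ℕ → ℕ → k, IsFinGL g ∧ g 0 = u ∧ g 1 = v := by
  have hcd : c ≠ d := by
    intro h; subst h; apply hm; ring
  set e : ℕ := Equiv.swap 0 c d with he
  set σ : Equiv.Perm ℕ := Equiv.swap 0 c * Equiv.swap 1 e with hσ
  have hσ0 : σ 0 = c := by
    have h1 : (Equiv.swap 1 e) 0 = 0 := by
      apply Equiv.swap_apply_of_ne_of_ne
      · exact zero_ne_one
      · intro h0
        apply hcd
        have h2 : (Equiv.swap 0 c) d = (Equiv.swap 0 c) c := by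
          rw [Equiv.swap_apply_right, ← he, ← h0]
        exact ((Equiv.swap 0 c).injective h2).symm
    rw [hσ, Equiv.Perm.mul_apply, h1, Equiv.swap_apply_left]
  have hσ1 : σ 1 = d := by
    rw [hσ, Equiv.Perm.mul_apply, Equiv.swap_apply_left, he, Equiv.swap_apply_self]
  set N : ℕ := M + c + d + 2 with hN
  have hcN : c < N := by omega
  have hdN : d < N := by omega
  have heN : e < N := by
    rw [he]
    by_cases h1 : d = 0
    · rw [h1, Equiv.swap_apply_left]; omega
    · by_cases h2 : d = c
      · rw [h2, Equiv.swap_apply_right]; omega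
      · rw [Equiv.swap_apply_of_ne_of_ne h1 h2]; omega
  have hfix : ∀ n, N ≤ n → σ n = n := by
    intro n hn
    have h1 : (Equiv.swap 1 e) n = n :=
      Equiv.swap_apply_of_ne_of_ne (by omega) (by omega)
    have h2 : (Equiv.swap 0 c) n = n :=
      Equiv.swap_apply_of_ne_of_ne (by omega) (by omega)
    simp [hσ, Equiv.Perm.mul_apply, h1, h2]
  have hlt : ∀ n, n < N → σ n < N := by
    intro n hn
    by_contra hge
    push_neg at hge
    have := hfix (σ n) hge
    exact absurd (σ.injective this) (by omega)
  set g : ℕ → ℕ → k := fun i j =>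
    if i = 0 then u j else if i = 1 then v j else if (σ i : ℕ) = j then 1 else 0 with hg
  refine ⟨g, ⟨N, ?_, ?_⟩, ?_, ?_⟩
  · -- finitary
    intro i j hij
    rcases hij with hi | hj
    · have hi0 : i ≠ 0 := by omega
      have hi1 : i ≠ 1 := by omega
      simp only [hg, hi0, hi1, if_false, hfix i hi]
    · by_cases hi : N ≤ i
      · have hi0 : i ≠ 0 := by omega
        have hi1 : i ≠ 1 := by omega
        simp only [hg, hi0, hi1, if_false, hfix i hi]
      · push_neg at hi
        have hij' : i ≠ j := by omega
        rcases Nat.lt_or_ge i 2 with h2 | h2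
        · interval_cases i
          · simp [hg, hu j (by omega), hij']
          · simp [hg, hv j (by omega), hij']
        · have hi0 : i ≠ 0 := by omega
          have hi1 : i ≠ 1 := by omega
          have : (σ i : ℕ) ≠ j := by
            have := hlt i hi; omega
          simp [hg, hi0, hi1, this, hij']
  · -- invertible block
    rw [← Matrix.linearIndependent_rows_iff_isUnit]
    have hN2 : 2 ≤ N := by omega
    rw [Fintype.linearIndependent_iff]
    intro x hx
    have hcoord : ∀ j : Fin N, ∑ i : Fin N, x i * g i.1 j.1 = 0 := by
      intro j
      have := congrFun hx j
      simpa [Finset.sum_apply, Matrix.of_apply, mul_comm] using this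
    set i0 : Fin N := ⟨0, by omega⟩ with hi0
    set i1 : Fin N := ⟨1, by omega⟩ with hi1
    have hi01 : i0 ≠ i1 := by simp [hi0, hi1, Fin.ext_iff]
    have pair : ∀ w : ℕ, w < N → (∀ i : Fin N, 2 ≤ i.1 → (σ i.1 : ℕ) ≠ w) →
        x i0 * u w + x i1 * v w = 0 := by
      intro w hw hwne
      have h := hcoord ⟨w, hw⟩
      rw [← Finset.sum_subset (Finset.subset_univ ({i0, i1} : Finset (Fin N)))] at h
      · rwa [Finset.sum_pair hi01] at h
      · intro i _ hi
        simp only [Finset.mem_insert, Finset.mem_singleton] at hi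
        push_neg at hi
        have h2 : 2 ≤ i.1 := by
          rcases hi with ⟨h1, h2⟩
          rcases Nat.lt_or_ge i.1 2 with h | h
          · interval_cases hh : i.1
            · exact absurd (Fin.ext hh) h1
            · exact absurd (Fin.ext hh) h2
          · exact h
        have hne0 : i.1 ≠ 0 := by omega
        have hne1 : i.1 ≠ 1 := by omega
        simp [hg, hne0, hne1, hwne i h2]
    have hσne_c : ∀ i : Fin N, 2 ≤ i.1 → (σ i.1 : ℕ) ≠ c := by
      intro i h2 hc
      have : i.1 = 0 := σ.injective (by rw [hc, hσ0])
      omega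
    have hσne_d : ∀ i : Fin N, 2 ≤ i.1 → (σ i.1 : ℕ) ≠ d := by
      intro i h2 hd
      have : i.1 = 1 := σ.injective (by rw [hd, hσ1])
      omega
    have ec := pair c hcN hσne_c
    have ed := pair d hdN hσne_d
    have hx0 : x i0 = 0 := by
      have : x i0 * (u c * v d - u d * v c) = 0 := by linear_combination v d * ec - v c * ed
      exact (mul_eq_zero.1 this).resolve_right hm
    have hx1 : x i1 = 0 := by
      have : x i1 * (u c * v d - u d * v c) = 0 := by linear_combination u c * ed - u d * ec
      exact (mul_eq_zero.1 this).resolve_right hm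
    intro i
    rcases Nat.lt_or_ge i.1 2 with h | h2
    · interval_cases hh : i.1
      · rw [show i = i0 from Fin.ext hh]; exact hx0
      · rw [show i = i1 from Fin.ext hh]; exact hx1
    · have hσi : (σ i.1 : ℕ) < N := hlt i.1 i.2
      have h := hcoord ⟨σ i.1, hσi⟩
      rw [Finset.sum_eq_single i] at h
      · have hne0 : i.1 ≠ 0 := by omega
        have hne1 : i.1 ≠ 1 := by omega
        simpa [hg, hne0, hne1] using h
      · intro b _ hbi
        rcases Nat.lt_or_ge b.1 2 with hb | hb2
        · interval_cases hh : b.1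
          · rw [show b = i0 from Fin.ext hh]; rw [hx0]; ring
          · rw [show b = i1 from Fin.ext hh]; rw [hx1]; ring
        · have hb0 : b.1 ≠ 0 := by omega
          have hb1 : b.1 ≠ 1 := by omega
          have : (σ b.1 : ℕ) ≠ σ i.1 := fun hh =>
            hbi (Fin.ext (σ.injective hh))
          simp [hg, hb0, hb1, this]
      · intro hni; exact absurd (Finset.mem_univ i) hni
  · funext j; simp [hg]
  · funext j; simp [hg]

/-- The key lemma: if the orbit equation holds for all finitary `g`, it holds for the
bilinear forms attached to arbitrary finitely supported vectors. -/
lemma key (A : ℕ → ℕ → k)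
    (hA : ∀ g : ℕ → ℕ → k, IsFinGL g →
      (congAct g A 0 1 + congAct g A 1 0) * (congAct g A 0 1 - congAct g A 1 0) = 0)
    (M : ℕ) (u v : ℕ → k) (hu : ∀ n, M ≤ n → u n = 0) (hv : ∀ n, M ≤ n → v n = 0) :
    (dsum M A u v + dsum M A v u) * (dsum M A u v - dsum M A v u) = 0 := by
  by_cases hdep : ∀ c d, u c * v d = u d * v c
  · have heq : dsum M A u v = dsum M A v u := by
      rcases dep_of_minors u v hdep with ⟨c, hc⟩ | ⟨c, hc⟩
      · have hveq : v = fun n => c * u n := funext hc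
        rw [hveq, dsum_smul_right, dsum_smul_left]
      · have hueq : u = fun n => c * v n := funext hc
        rw [hueq, dsum_smul_right, dsum_smul_left]
    rw [heq, sub_self, mul_zero]
  · push_neg at hdep
    obtain ⟨c, d, hm⟩ := hdep
    have hm' : u c * v d - u d * v c ≠ 0 := sub_ne_zero_of_ne hm
    obtain ⟨g, hgGL, hg0, hg1⟩ := exists_finGL M c d u v hu hv hm'
    have h01 : congAct g A 0 1 = dsum M A u v := by
      show (∑ᶠ s : ℕ, ∑ᶠ t : ℕ, g 0 s * g 1 t * A s t) = _
      rw [hg0, hg1]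
      exact finsum_double_eq M A u v hu hv
    have h10 : congAct g A 1 0 = dsum M A v u := by
      show (∑ᶠ s : ℕ, ∑ᶠ t : ℕ, g 1 s * g 0 t * A s t) = _
      rw [hg0, hg1]
      exact finsum_double_eq M A v u hv hu
    have := hA g hgGL
    rwa [h01, h10] at this

end SymSkewAux

open SymSkewAux in
/-- A family `(A_s)_{s ∈ ℕ}` of `ℕ×ℕ` matrices consists of matrices each of
which is symmetric or skew-symmetric if and only if for every `s` and every
`g ∈ GL`, writing `B = g • A_s` for the congruence action, one has
`(B 0 1 + B 1 0) * (B 0 1 - B 1 0) = 0`; i.e. this set of tuples is cut out by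
the `Sym × GL`-orbit of the single equation `(x₁₁₂ + x₁₂₁)(x₁₁₂ - x₁₂₁)`. -/
theorem symmetric_or_skew_iff_orbit_equation
    {k : Type*} [Field k] [IsAlgClosed k] [CharZero k]
    (A : ℕ → ℕ → ℕ → k) :
    (∀ s : ℕ, (∀ i j : ℕ, A s i j = A s j i) ∨ (∀ i j : ℕ, A s i j = - A s j i)) ↔
    (∀ (s : ℕ) (g : ℕ → ℕ → k), IsFinGL g →
      (congAct g (A s) 0 1 + congAct g (A s) 1 0) *
        (congAct g (A s) 0 1 - congAct g (A s) 1 0) = 0) := by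
  constructor
  · -- forward direction
    intro h s g hg
    obtain ⟨N, hfin, -⟩ := hg
    have hu : ∀ n, N + 2 ≤ n → g 0 n = 0 := by
      intro n hn
      rw [hfin 0 n (Or.inr (by omega)), if_neg (by omega)]
    have hv : ∀ n, N + 2 ≤ n → g 1 n = 0 := by
      intro n hn
      rw [hfin 1 n (Or.inr (by omega)), if_neg (by omega)]
    have h01 : congAct g (A s) 0 1 = dsum (N + 2) (A s) (g 0) (g 1) :=
      finsum_double_eq (N + 2) (A s) (g 0) (g 1) hu hv
    have h10 : congAct g (A s) 1 0 = dsum (N + 2) (A s) (g 1) (g 0) :=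
      finsum_double_eq (N + 2) (A s) (g 1) (g 0) hv hu
    rw [h01, h10]
    rcases h s with hs | hs
    · have heq := dsum_symm_of_symm (N + 2) (A s) hs (g 0) (g 1)
      rw [heq, sub_self, mul_zero]
    · have heq := dsum_neg_of_skew (N + 2) (A s) hs (g 0) (g 1)
      linear_combination (dsum (N + 2) (A s) (g 0) (g 1) - dsum (N + 2) (A s) (g 1) (g 0)) * heq
  · -- backward direction
    intro h s
    by_contra hns
    push_neg at hns
    obtain ⟨⟨i, j, hij⟩, ⟨p, q, hpq⟩⟩ := hns
    set B := A s with hB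
    set M : ℕ := i + j + p + q + 1 with hM
    have hiM : i < M := by omega
    have hjM : j < M := by omega
    have hpM : p < M := by omega
    have hqM : q < M := by omega
    have hprod : ∀ x y : k,
        ((B i j - B j i) + (B p j - B j p) * x + (B i q - B q i) * y +
          (B p q - B q p) * (x * y)) *
        ((B i j + B j i) + (B p j + B j p) * x + (B i q + B q i) * y +
          (B p q + B q p) * (x * y)) = 0 := by
      intro x y
      have hu : ∀ n, M ≤ n → sbv i n + x * sbv p n = (0 : k) := by
        intro n hn
        rw [show sbv i n = (0 : k) from if_neg (by omega),
          show sbv p n = (0 : k) from if_neg (by omega)]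
        ring
      have hv : ∀ n, M ≤ n → sbv j n + y * sbv q n = (0 : k) := by
        intro n hn
        rw [show sbv j n = (0 : k) from if_neg (by omega),
          show sbv q n = (0 : k) from if_neg (by omega)]
        ring
      have h0 := key B (h s) M (fun n => sbv i n + x * sbv p n)
        (fun n => sbv j n + y * sbv q n) hu hv
      rw [dsum_expand M B i p j q hiM hpM hjM hqM x y,
        dsum_expand M B j q i p hjM hqM hiM hpM y x] at h0
      linear_combination h0
    have := poly2 (B i j - B j i) (B p j - B j p) (B i q - B q i) (B p q - B q p)
      (B i j + B j i) (B p j + B j p) (B i q + B q i) (B p q + B q p)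
      (by intro x y; linear_combination hprod x y)
    rcases this with h0 | h0
    · exact hij (by linear_combination h0)
    · exact hpq (by linear_combination h0)
end
end
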